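/- arXiv:1601.02997 — 4 statements merged into one kernel-verified Lean document; each statement's English description precedes it below -/
import Mathlib

section
/- Master Lemma: A signed pattern (ε₁a₁, …, εₙaₙ) is weakly realizable if and only if for all indices 1 ≤ i < j ≤ n the following two conditions hold, where g = gcd(aᵢ, aⱼ) and I = ∑_{i<k<j} εₖaₖ (the sum of the intermediate path, an integer): (Divisibility) g divides I; and (Parity) I/g is even if and only if Q(i,j) holds, where Q(i,j) is the condition 'εᵢ = −1' in case ν₂(aᵢ) < ν₂(aⱼ), the condition 'εⱼ = +1' in case ν₂(aᵢ) > ν₂(aⱼ), and the condition 'εᵢ = −εⱼ' in case ν₂(aᵢ) = ν₂(aⱼ). -/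
/-- A signed pattern is a list of pairs `(ε, a)` with `ε ∈ {1, -1}` and `a` a positive skip size. -/
def IsSignedPattern (p : List (ℤ × ℕ)) : Prop :=
  ∀ e ∈ p, (e.1 = 1 ∨ e.1 = -1) ∧ 0 < e.2

/-- The (signed) sum of the steps of a pattern. -/
def stepSum (p : List (ℤ × ℕ)) : ℤ :=
  (p.map (fun e => e.1 * (e.2 : ℤ))).sum

/-- The `i`-th term of the pattern started at `T`: `T_i = T + ε₁a₁ + ⋯ + εᵢaᵢ`. -/
def patTerm (T : ℤ) (p : List (ℤ × ℕ)) (i : ℕ) : ℤ :=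
  T + stepSum (p.take i)

/-- The pattern `p` is weakly realized starting from `T`: `T` is a nonnegative integer, all terms
are nonnegative, and the left term of each step is an even multiple of its skip size when the
sign is `+1`, and an odd multiple when the sign is `-1`. -/
def WeaklyRealizableFrom (T : ℤ) (p : List (ℤ × ℕ)) : Prop :=
  0 ≤ T ∧ (∀ i, i ≤ p.length → 0 ≤ patTerm T p i) ∧
    ∀ (i : ℕ) (h : i < p.length),
      ((p.get ⟨i, h⟩).1 = 1 → ∃ k : ℤ, patTerm T p i = 2 * k * ((p.get ⟨i, h⟩).2 : ℤ)) ∧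
      ((p.get ⟨i, h⟩).1 = -1 → ∃ k : ℤ, patTerm T p i = (2 * k + 1) * ((p.get ⟨i, h⟩).2 : ℤ))

/-- A pattern is weakly realizable if it is weakly realized from some starting point. -/
def WeaklyRealizable (p : List (ℤ × ℕ)) : Prop :=
  ∃ T : ℤ, WeaklyRealizableFrom T p

/-- A pattern is realizable if it is weakly realized from some starting point in such a way that
all of its terms `T₀, …, Tₙ` are pairwise distinct. -/
def Realizable (p : List (ℤ × ℕ)) : Prop :=
  ∃ T : ℤ, WeaklyRealizableFrom T p ∧
    ∀ i j : ℕ, i ≤ p.length → j ≤ p.length → i ≠ j → patTerm T p i ≠ patTerm T p j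

/-! The step condition at position `i` says that `T + ε₁a₁ + ⋯ + εᵢaᵢ` is `≡ 0` or `≡ aᵢ`
mod `2aᵢ`, i.e. that the start `T` lies in a prescribed class `rᵢ` (`startResidue`) mod `2aᵢ`.
These conditions are periodic in `T`, so nonnegativity of the terms costs nothing: add a large
multiple of `∏ 2aᵢ`. Weak realizability is therefore the solvability of a system of congruences,
which by the Chinese remainder theorem for non-coprime moduli holds iff every pair is compatible:
`gcd(2aᵢ, 2aⱼ) = 2g` divides `rᵢ - rⱼ = I + [εᵢ = 1] aᵢ - [εⱼ = -1] aⱼ`. With `aᵢ = g u` and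
`aⱼ = g w` this says `g ∣ I` and `I / g ≡ [εᵢ = 1] u - [εⱼ = -1] w` mod 2; as `u` is odd iff
`ν₂(aᵢ) ≤ ν₂(aⱼ)` and `w` is odd iff `ν₂(aⱼ) ≤ ν₂(aᵢ)`, the three cases give `Q(i, j)`. -/

theorem Nat.gcd_lcm_dvd_lcm_gcd (a b c : ℕ) :
    Nat.gcd a (Nat.lcm b c) ∣ Nat.lcm (Nat.gcd a b) (Nat.gcd a c) := by
  rcases eq_or_ne a 0 with rfl | ha
  · simp
  rcases eq_or_ne b 0 with rfl | hb
  · simpa using Nat.dvd_lcm_left a (Nat.gcd a c)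
  rcases eq_or_ne c 0 with rfl | hc
  · simpa using Nat.dvd_lcm_right (Nat.gcd a b) a
  have hab := Nat.gcd_ne_zero_left (n := b) ha
  have hac := Nat.gcd_ne_zero_left (n := c) ha
  rw [← Nat.factorization_le_iff_dvd (Nat.gcd_ne_zero_left ha) (Nat.lcm_ne_zero hab hac),
    Nat.factorization_gcd ha (Nat.lcm_ne_zero hb hc), Nat.factorization_lcm hab hac,
    Nat.factorization_lcm hb hc, Nat.factorization_gcd ha hb, Nat.factorization_gcd ha hc]
  intro q
  simp only [Finsupp.inf_apply, Finsupp.sup_apply]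
  omega

theorem Nat.gcd_finset_lcm_dvd_lcm_gcd {ι : Type*} [DecidableEq ι] (a : ℕ) (s : Finset ι)
    (f : ι → ℕ) : Nat.gcd a (s.lcm f) ∣ s.lcm fun i => Nat.gcd a (f i) := by
  induction s using Finset.induction_on with
  | empty => simp
  | insert b s _ ih =>
    rw [Finset.lcm_insert, Finset.lcm_insert]
    exact (Nat.gcd_lcm_dvd_lcm_gcd _ _ _).trans (lcm_dvd_lcm dvd_rfl ih)

theorem Int.exists_dvd_sub_and_dvd_sub_of_gcd_dvd (a b : ℕ) (r s : ℤ)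
    (h : (Nat.gcd a b : ℤ) ∣ r - s) :
    ∃ x : ℤ, (a : ℤ) ∣ x - r ∧ (b : ℤ) ∣ x - s := by
  obtain ⟨c, hc⟩ := h
  refine ⟨r - a * Nat.gcdA a b * c, ⟨-(Nat.gcdA a b * c), by ring⟩,
    ⟨Nat.gcdB a b * c, by linear_combination hc + c * Nat.gcd_eq_gcd_ab a b⟩⟩

theorem Int.exists_forall_dvd_sub_iff {ι : Type*} [DecidableEq ι] (s : Finset ι) (m : ι → ℕ)
    (r : ι → ℤ) :
    (∃ x : ℤ, ∀ i ∈ s, (m i : ℤ) ∣ x - r i) ↔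
      ∀ i ∈ s, ∀ j ∈ s, (Nat.gcd (m i) (m j) : ℤ) ∣ r i - r j := by
  constructor
  · rintro ⟨x, hx⟩ i hi j hj
    have hi' := (Int.natCast_dvd_natCast.2 (Nat.gcd_dvd_left (m i) (m j))).trans (hx i hi)
    have hj' := (Int.natCast_dvd_natCast.2 (Nat.gcd_dvd_right (m i) (m j))).trans (hx j hj)
    simpa using dvd_sub hj' hi'
  induction s using Finset.induction_on with
  | empty => simp
  | insert a s ha ih =>
    intro h
    simp only [Finset.mem_insert, forall_eq_or_imp] at h ⊢
    obtain ⟨x, hx⟩ := ih fun i hi j hj => h.2 i hi |>.2 j hj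
    have hcompat : (Nat.gcd (m a) (s.lcm m) : ℤ) ∣ r a - x := by
      refine (Int.natCast_dvd_natCast.2 (Nat.gcd_finset_lcm_dvd_lcm_gcd _ _ _)).trans ?_
      refine Int.natCast_dvd.2 (Finset.lcm_dvd fun i hi => Int.natCast_dvd.1 ?_)
      have hxi := (Int.natCast_dvd_natCast.2 (Nat.gcd_dvd_right (m a) (m i))).trans (hx i hi)
      simpa using dvd_sub (h.1.2 i hi) hxi
    obtain ⟨y, hya, hyx⟩ := Int.exists_dvd_sub_and_dvd_sub_of_gcd_dvd _ _ _ _ hcompat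
    refine ⟨y, hya, fun i hi => ?_⟩
    have := ((Int.natCast_dvd_natCast.2 (Finset.dvd_lcm hi)).trans hyx).add (hx i hi)
    simpa using this

theorem Int.two_mul_dvd_add_mul_iff {g : ℤ} (hg : g ≠ 0) (I c : ℤ) :
    2 * g ∣ I + g * c ↔ g ∣ I ∧ ((∃ m : ℤ, I = 2 * m * g) ↔ 2 ∣ c) := by
  have hmul : ∀ t, 2 * g ∣ g * t ↔ 2 ∣ t := fun t => by
    rw [mul_comm 2 g]; exact mul_dvd_mul_iff_left hg
  have hmul' : ∀ t, (∃ m : ℤ, g * t = 2 * m * g) ↔ 2 ∣ t := fun t =>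
    exists_congr fun m => by rw [show 2 * m * g = g * (2 * m) by ring, mul_right_inj' hg]
  constructor
  · intro h
    obtain ⟨t, rfl⟩ := (dvd_add_left (dvd_mul_right g c)).1 (dvd_trans (dvd_mul_left g 2) h)
    rw [← mul_add, hmul] at h
    rw [hmul']
    exact ⟨dvd_mul_right g t, by omega⟩
  · rintro ⟨⟨t, rfl⟩, hpar⟩
    rw [hmul'] at hpar
    rw [← mul_add, hmul]
    omega

theorem padicValNat_gcd (p : ℕ) [Fact p.Prime] {a b : ℕ} (ha : a ≠ 0) (hb : b ≠ 0) :
    padicValNat p (Nat.gcd a b) = min (padicValNat p a) (padicValNat p b) := by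
  simp only [← Nat.factorization_def _ Fact.out, Nat.factorization_gcd ha hb, Finsupp.inf_apply]

theorem Nat.two_dvd_div_gcd_iff {a b : ℕ} (ha : a ≠ 0) (hb : b ≠ 0) :
    2 ∣ a / Nat.gcd a b ↔ padicValNat 2 b < padicValNat 2 a := by
  have : Fact (Nat.Prime 2) := ⟨Nat.prime_two⟩
  have hq : a / Nat.gcd a b ≠ 0 :=
    (Nat.div_pos (Nat.gcd_le_left b ha.bot_lt) (Nat.gcd_pos_of_pos_left b ha.bot_lt)).ne'
  rw [dvd_iff_padicValNat_ne_zero hq, padicValNat.div_of_dvd (Nat.gcd_dvd_left a b),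
    padicValNat_gcd 2 ha hb]
  omega

theorem two_mul_gcd_dvd_iff_divisibility_parity {a b : ℕ} (ha : a ≠ 0) (hb : b ≠ 0) {ε δ : ℤ}
    (hε : ε = 1 ∨ ε = -1) (hδ : δ = 1 ∨ δ = -1) (I : ℤ) :
    (2 * Nat.gcd a b : ℤ) ∣
        I + (if ε = 1 then (a : ℤ) else 0) - (if δ = 1 then 0 else (b : ℤ)) ↔
      (Nat.gcd a b : ℤ) ∣ I ∧ ((∃ m : ℤ, I = 2 * m * (Nat.gcd a b : ℤ)) ↔
        if padicValNat 2 a < padicValNat 2 b then ε = -1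
        else if padicValNat 2 b < padicValNat 2 a then δ = 1
        else ε = -δ) := by
  set g := Nat.gcd a b
  have hg : (g : ℤ) ≠ 0 := by exact_mod_cast Nat.gcd_ne_zero_left ha
  have hu : 2 ∣ a / g ↔ padicValNat 2 b < padicValNat 2 a := Nat.two_dvd_div_gcd_iff ha hb
  have hw : 2 ∣ b / g ↔ padicValNat 2 a < padicValNat 2 b := by
    rw [← Nat.two_dvd_div_gcd_iff hb ha, Nat.gcd_comm]
  have hdecomp : I + (if ε = 1 then (a : ℤ) else 0) - (if δ = 1 then 0 else (b : ℤ)) =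
      I + g * ((if ε = 1 then ((a / g : ℕ) : ℤ) else 0) -
        (if δ = 1 then 0 else ((b / g : ℕ) : ℤ))) := by
    have hau : (a : ℤ) = g * (a / g : ℕ) := by
      exact_mod_cast (Nat.mul_div_cancel' (Nat.gcd_dvd_left a b)).symm
    have hbw : (b : ℤ) = g * (b / g : ℕ) := by
      exact_mod_cast (Nat.mul_div_cancel' (Nat.gcd_dvd_right a b)).symm
    rw [hau, hbw]
    split_ifs <;> ring
  rw [hdecomp, Int.two_mul_dvd_add_mul_iff hg]
  refine and_congr_right fun _ => iff_congr Iff.rfl ?_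
  generalize a / g = u at hu ⊢
  generalize b / g = w at hw ⊢
  rcases hε with rfl | rfl <;> rcases hδ with rfl | rfl <;>
    simp only [Int.reduceEq, Int.reduceNeg, ↓reduceIte, neg_neg] <;> split_ifs <;>
    simp only [iff_true, iff_false] <;> omega

theorem stepSum_append (q r : List (ℤ × ℕ)) : stepSum (q ++ r) = stepSum q + stepSum r := by
  simp [stepSum]

theorem stepSum_take_eq_add {p : List (ℤ × ℕ)} {i j : ℕ} (hij : i < j) (hi : i < p.length) :
    stepSum (p.take j) = stepSum (p.take i) + (p.get ⟨i, hi⟩).1 * (p.get ⟨i, hi⟩).2 +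
      stepSum ((p.take j).drop (i + 1)) := by
  conv_lhs => rw [← List.take_append_drop (i + 1) (p.take j)]
  rw [List.take_take, min_eq_left hij, List.take_add_one, List.getElem?_eq_getElem hi,
    stepSum_append, stepSum_append]
  simp [stepSum]

theorem patTerm_zero (T : ℤ) (p : List (ℤ × ℕ)) : patTerm T p 0 = T := by
  simp [patTerm, stepSum]

theorem patTerm_add (T c : ℤ) (p : List (ℤ × ℕ)) (i : ℕ) :
    patTerm (T + c) p i = patTerm T p i + c := by
  simp only [patTerm]; ring

def stepResidue (e : ℤ × ℕ) : ℤ := if e.1 = 1 then 0 else e.2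

theorem step_condition_iff_dvd {e : ℤ × ℕ} (he : e.1 = 1 ∨ e.1 = -1) (t : ℤ) :
    ((e.1 = 1 → ∃ k : ℤ, t = 2 * k * (e.2 : ℤ)) ∧
        (e.1 = -1 → ∃ k : ℤ, t = (2 * k + 1) * (e.2 : ℤ))) ↔
      2 * (e.2 : ℤ) ∣ t - stepResidue e := by
  rcases he with he | he <;> simp only [stepResidue, he, Int.reduceEq, Int.reduceNeg, ↓reduceIte,
    true_implies, false_implies, and_true, true_and, sub_zero] <;>
  exact exists_congr fun k => by constructor <;> intro h <;> linear_combination h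

def startResidue (p : List (ℤ × ℕ)) (i : Fin p.length) : ℤ :=
  stepResidue (p.get i) - stepSum (p.take i)

theorem patTerm_sub_stepResidue (T : ℤ) (p : List (ℤ × ℕ)) (i : Fin p.length) :
    patTerm T p i - stepResidue (p.get i) = T - startResidue p i := by
  simp only [patTerm, startResidue]; ring

theorem weaklyRealizable_iff_exists_forall_dvd {p : List (ℤ × ℕ)} (hp : IsSignedPattern p) :
    WeaklyRealizable p ↔
      ∃ T : ℤ, ∀ i : Fin p.length, 2 * ((p.get i).2 : ℤ) ∣ T - startResidue p i := by
  have hstep : ∀ T (i : Fin p.length), _ ↔ _ := fun T i =>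
    patTerm_sub_stepResidue T p i ▸
      step_condition_iff_dvd (hp _ (p.get_mem i)).1 (patTerm T p i)
  constructor
  · rintro ⟨T, -, -, hcond⟩
    exact ⟨T, fun i => (hstep T i).1 (hcond i i.2)⟩
  · rintro ⟨T, hT⟩
    set M : ℤ := ∏ i : Fin p.length, 2 * ((p.get i).2 : ℤ)
    have hM : 0 < M := Finset.prod_pos fun i _ => by
      have := (hp _ (p.get_mem i)).2
      positivity
    set K : ℤ := ∑ k ∈ Finset.range (p.length + 1), |patTerm T p k|
    have hK : ∀ k ≤ p.length, 0 ≤ patTerm T p k + M * K := fun k hk => by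
      have h1 : |patTerm T p k| ≤ K :=
        Finset.single_le_sum (f := fun k => |patTerm T p k|) (fun _ _ => abs_nonneg _)
          (Finset.mem_range_succ_iff.2 hk)
      nlinarith [neg_abs_le (patTerm T p k), abs_nonneg (patTerm T p k)]
    refine ⟨T + M * K, ?_, fun k hk => (patTerm_add ..).symm ▸ hK k hk, fun i hi => ?_⟩
    · simpa [patTerm_zero] using hK 0 (Nat.zero_le _)
    · refine (hstep _ ⟨i, hi⟩).2 ?_
      rw [add_sub_right_comm]
      exact (hT _).add ((Finset.dvd_prod_of_mem _ (Finset.mem_univ _)).mul_right K)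

theorem stepResidue_add_step {e : ℤ × ℕ} (he : e.1 = 1 ∨ e.1 = -1) :
    stepResidue e + e.1 * e.2 = if e.1 = 1 then (e.2 : ℤ) else 0 := by
  rcases he with h | h <;> simp [stepResidue, h]

theorem startResidue_sub_startResidue {p : List (ℤ × ℕ)} {i j : Fin p.length} (hij : i < j) :
    startResidue p i - startResidue p j = stepSum ((p.take j).drop (i + 1)) +
      (stepResidue (p.get i) + (p.get i).1 * (p.get i).2) - stepResidue (p.get j) := by
  rw [startResidue, startResidue, stepSum_take_eq_add hij i.2]
  ring

theorem two_mul_gcd_dvd_startResidue_sub_iff {p : List (ℤ × ℕ)} (hp : IsSignedPattern p)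
    {i j : ℕ} (hij : i < j) (hj : j < p.length) :
    (Nat.gcd (2 * (p.get ⟨i, hij.trans hj⟩).2) (2 * (p.get ⟨j, hj⟩).2) : ℤ) ∣
        startResidue p ⟨i, hij.trans hj⟩ - startResidue p ⟨j, hj⟩ ↔
      (Nat.gcd (p.get ⟨i, hij.trans hj⟩).2 (p.get ⟨j, hj⟩).2 : ℤ) ∣
          stepSum ((p.take j).drop (i + 1)) ∧
        ((∃ m : ℤ, stepSum ((p.take j).drop (i + 1)) =
              2 * m * (Nat.gcd (p.get ⟨i, hij.trans hj⟩).2 (p.get ⟨j, hj⟩).2 : ℤ)) ↔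
          (if padicValNat 2 (p.get ⟨i, hij.trans hj⟩).2 < padicValNat 2 (p.get ⟨j, hj⟩).2 then
              (p.get ⟨i, hij.trans hj⟩).1 = -1
            else if padicValNat 2 (p.get ⟨j, hj⟩).2 < padicValNat 2 (p.get ⟨i, hij.trans hj⟩).2 then
              (p.get ⟨j, hj⟩).1 = 1
            else (p.get ⟨i, hij.trans hj⟩).1 = -(p.get ⟨j, hj⟩).1)) := by
  have hei := hp _ (p.get_mem ⟨i, hij.trans hj⟩)
  have hej := hp _ (p.get_mem ⟨j, hj⟩)
  rw [startResidue_sub_startResidue (show (⟨i, _⟩ : Fin p.length) < ⟨j, hj⟩ from hij),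
    stepResidue_add_step hei.1, Nat.gcd_mul_left]
  push_cast
  exact two_mul_gcd_dvd_iff_divisibility_parity hei.2.ne' hej.2.ne' hei.1 hej.1 _

/-- **Master Lemma.** A signed pattern is weakly realizable if and only if for all indices
`i < j` the Divisibility and Parity conditions hold, where `g = gcd(aᵢ, aⱼ)` and `I` is the sum
of the intermediate path. -/
theorem master_lemma (p : List (ℤ × ℕ)) (hp : IsSignedPattern p) :
    WeaklyRealizable p ↔
      ∀ (i j : ℕ) (hij : i < j) (hj : j < p.length),
        ((Nat.gcd (p.get ⟨i, hij.trans hj⟩).2 (p.get ⟨j, hj⟩).2 : ℤ) ∣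
            stepSum ((p.take j).drop (i + 1))) ∧
        ((∃ m : ℤ, stepSum ((p.take j).drop (i + 1)) =
              2 * m * (Nat.gcd (p.get ⟨i, hij.trans hj⟩).2 (p.get ⟨j, hj⟩).2 : ℤ)) ↔
          (if padicValNat 2 (p.get ⟨i, hij.trans hj⟩).2 < padicValNat 2 (p.get ⟨j, hj⟩).2 then
              (p.get ⟨i, hij.trans hj⟩).1 = -1
            else if padicValNat 2 (p.get ⟨j, hj⟩).2 < padicValNat 2 (p.get ⟨i, hij.trans hj⟩).2 then
              (p.get ⟨j, hj⟩).1 = 1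
            else (p.get ⟨i, hij.trans hj⟩).1 = -(p.get ⟨j, hj⟩).1)) := by
  have crt := Int.exists_forall_dvd_sub_iff Finset.univ
    (fun i : Fin p.length => 2 * (p.get i).2) (startResidue p)
  simp only [Finset.mem_univ, true_implies, Nat.cast_mul, Nat.cast_ofNat] at crt
  rw [weaklyRealizable_iff_exists_forall_dvd hp, crt]
  constructor
  · intro h i j hij hj
    exact (two_mul_gcd_dvd_startResidue_sub_iff hp hij hj).1 (h _ _)
  · intro h i j
    rcases lt_trichotomy i j with hlt | rfl | hgt
    · exact (two_mul_gcd_dvd_startResidue_sub_iff hp hlt j.2).2 (h i j hlt j.2)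
    · simp
    · rw [Nat.gcd_comm, ← dvd_neg, neg_sub]
      exact (two_mul_gcd_dvd_startResidue_sub_iff hp hgt i.2).2 (h j i hgt i.2)
end

section
/- If S is a set of at most two positive integers, then there exists a sequence x : {1,2,3,…} → {−1,+1} such that |∑_{i=1}^{k} x(i·s)| ≤ 1 for every s ∈ S and every k ≥ 1; that is, the natural numbers can be 2-colored with discrepancy 1 with respect to every homogeneous arithmetic progression with common difference in S. -/
/-- The natural numbers can be `±1`-colored so that every homogeneous arithmetic progression
with common difference in `S` has discrepancy at most 1. -/
def HasDiscrepancyOne (S : Set ℕ) : Prop :=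
  ∃ x : ℕ → ℤ, (∀ n, x n = 1 ∨ x n = -1) ∧
    ∀ s ∈ S, ∀ k : ℕ, 1 ≤ k → |∑ i ∈ Finset.Icc 1 k, x (i * s)| ≤ 1

/-- The skip set `S` forces discrepancy two. -/
def ForcesDiscrepancyTwo (S : Set ℕ) : Prop := ¬ HasDiscrepancyOne S

/-!
A `±1` sequence whose consecutive pairs `(y (2m+1), y (2m+2))` cancel has all partial sums in
`{-1, 0, 1}`, so it suffices to colour `ℕ` so that `x ((2m+1) s) = -x ((2m+2) s)` for both
`s = a` and `s = b`, where we may arrange `¬ b ∣ a`. Colour every multiple `n` of `b` by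
`(-1) ^ (n / b)`. The remaining multiples of `a` are grouped in the pairs `{(2m+1) a, (2m+2) a}`;
since `b ∤ a`, at most one member of such a pair is a multiple of `b`, so the colour of the other
member can be chosen opposite to it.
-/

open Finset

def AntiPaired (x : ℕ → ℤ) (s : ℕ) : Prop :=
  ∀ m : ℕ, x ((2 * m + 1) * s) + x ((2 * m + 2) * s) = 0

lemma sum_Icc_one_two_mul_eq_zero {y : ℕ → ℤ} (hy : ∀ m, y (2 * m + 1) + y (2 * m + 2) = 0)
    (k : ℕ) : ∑ i ∈ Icc 1 (2 * k), y i = 0 := by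
  induction k with
  | zero => simp
  | succ k ih =>
    rw [show 2 * (k + 1) = 2 * k + 1 + 1 by ring, sum_Icc_succ_top (by omega),
      sum_Icc_succ_top (by omega), ih, zero_add, add_assoc, hy]

lemma abs_sum_Icc_one_le_one {y : ℕ → ℤ} (hy₁ : ∀ i, |y i| ≤ 1)
    (hy : ∀ m, y (2 * m + 1) + y (2 * m + 2) = 0) (k : ℕ) : |∑ i ∈ Icc 1 k, y i| ≤ 1 := by
  obtain ⟨m, rfl | rfl⟩ := Nat.even_or_odd' k
  · simp [sum_Icc_one_two_mul_eq_zero hy]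
  · rw [sum_Icc_succ_top (by omega), sum_Icc_one_two_mul_eq_zero hy, zero_add]
    exact hy₁ _

lemma hasDiscrepancyOne_of_antiPaired {S : Set ℕ} {x : ℕ → ℤ}
    (hx : ∀ n, x n = 1 ∨ x n = -1) (hS : ∀ s ∈ S, AntiPaired x s) :
    HasDiscrepancyOne S := by
  refine ⟨x, hx, fun s hs k _ ↦ abs_sum_Icc_one_le_one (fun i ↦ ?_) (fun m ↦ ?_) k⟩
  · rcases hx (i * s) with h | h <;> simp [h]
  · exact hS s hs m

lemma HasDiscrepancyOne.mono {S T : Set ℕ} (hTS : T ⊆ S) (hS : HasDiscrepancyOne S) :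
    HasDiscrepancyOne T :=
  let ⟨x, hx, hsum⟩ := hS
  ⟨x, hx, fun s hs ↦ hsum s (hTS hs)⟩

/-- The other member of the pair `{(2m+1) a, (2m+2) a}` containing the multiple `n` of `a`. -/
def pairPartner (a n : ℕ) : ℕ :=
  if Even (n / a) then n - a else n + a

lemma pairPartner_odd {a : ℕ} (ha : 0 < a) (m : ℕ) :
    pairPartner a ((2 * m + 1) * a) = (2 * m + 2) * a := by
  rw [pairPartner, Nat.mul_div_cancel _ ha, if_neg (Nat.not_even_iff_odd.2 (odd_two_mul_add_one m))]
  ring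

lemma pairPartner_even {a : ℕ} (ha : 0 < a) (m : ℕ) :
    pairPartner a ((2 * m + 2) * a) = (2 * m + 1) * a := by
  rw [pairPartner, Nat.mul_div_cancel _ ha, if_pos ⟨m + 1, by ring⟩,
    show (2 * m + 2) * a = (2 * m + 1) * a + a by ring, Nat.add_sub_cancel]

def pairColoring (a b n : ℕ) : ℤ :=
  if b ∣ n then (-1) ^ (n / b)
  else if a ∣ n then
    if b ∣ pairPartner a n then -(-1) ^ (pairPartner a n / b) else (-1) ^ (n / a)
  else 1

section pairColoring

variable {a b : ℕ}

lemma pairColoring_eq_one_or (n : ℕ) : pairColoring a b n = 1 ∨ pairColoring a b n = -1 := by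
  unfold pairColoring
  split_ifs <;> simp [neg_one_pow_eq_or, neg_eq_iff_eq_neg, or_comm]

lemma antiPaired_pairColoring_right (hb : 0 < b) : AntiPaired (pairColoring a b) b := by
  intro m
  simp only [pairColoring, dvd_mul_left, if_true, Nat.mul_div_cancel _ hb, pow_succ]
  ring

lemma antiPaired_pairColoring_left (hba : ¬ b ∣ a) : AntiPaired (pairColoring a b) a := by
  intro m
  have ha : 0 < a := Nat.pos_of_ne_zero (by rintro rfl; exact hba (dvd_zero b))
  have hpair : ¬ (b ∣ (2 * m + 1) * a ∧ b ∣ (2 * m + 2) * a) := fun ⟨hu, hw⟩ ↦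
    hba <| (Nat.dvd_add_right hu).mp (by convert hw using 1; ring)
  simp only [pairColoring, pairPartner_odd ha, pairPartner_even ha, dvd_mul_left, if_true,
    Nat.mul_div_cancel _ ha]
  split_ifs <;> simp_all [pow_succ, pow_mul]

end pairColoring

lemma hasDiscrepancyOne_pair {a b : ℕ} (hb : 0 < b) (hba : ¬ b ∣ a) :
    HasDiscrepancyOne {a, b} := by
  refine hasDiscrepancyOne_of_antiPaired (x := pairColoring a b) pairColoring_eq_one_or ?_
  rintro s (rfl | rfl)
  exacts [antiPaired_pairColoring_left hba, antiPaired_pairColoring_right hb]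

lemma Finset.exists_lt_subset_pair_of_card_le_two {S : Finset ℕ} (hpos : ∀ s ∈ S, 0 < s)
    (hcard : #S ≤ 2) : ∃ a b, 0 < a ∧ a < b ∧ (S : Set ℕ) ⊆ {a, b} := by
  rcases S.eq_empty_or_nonempty with rfl | ⟨s, hs⟩
  · exact ⟨1, 2, one_pos, one_lt_two, by simp⟩
  rcases (by omega : #S ≤ 1 ∨ #S = 2) with hle | htwo
  · exact ⟨s, s + 1, hpos s hs, s.lt_succ_self,
      fun t ht ↦ Or.inl (card_le_one.1 hle t ht s hs)⟩
  obtain ⟨u, v, huv, rfl⟩ := card_eq_two.1 htwo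
  rcases huv.lt_or_gt with huv | hvu
  · exact ⟨u, v, hpos u (by simp), huv, by simp⟩
  · exact ⟨v, u, hpos v (by simp), hvu, by simp [Set.pair_comm]⟩

/-- **Skip sets of sizes 1 and 2.** If `|S| ≤ 2` then `ℕ` can be 2-colored with discrepancy 1
with respect to each homogeneous arithmetic progression with common difference in `S`. -/
theorem skip_sets_of_size_at_most_two (S : Finset ℕ) (hpos : ∀ s ∈ S, 0 < s)
    (hcard : S.card ≤ 2) : HasDiscrepancyOne ↑S := by
  obtain ⟨a, b, ha, hab, hS⟩ := S.exists_lt_subset_pair_of_card_le_two hpos hcard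
  exact (hasDiscrepancyOne_pair (ha.trans hab) (Nat.not_dvd_of_pos_of_lt ha hab)).mono hS
end

section
/- Let S = {a, x, y, z} be a reduced set of four positive integers with ν₂(a) > ν₂(x) = ν₂(y) = ν₂(z) (so x, y, z are odd and a is even), and suppose the skip graph G(S) contains no cycle of length 3. Then G(S) contains a cycle of length 5 if and only if the three odd elements can be labeled x, y, z so that: either a = 2x − y − z or a = y + z − 2x; x ∣ y; gcd(y, z) ∣ x; and gcd(a, y) ∣ x. -/
/-- The skip graph `G(S)`: for each `s ∈ S` and `k ∈ ℕ`, the vertices `2ks` and `(2k+1)s`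
are joined by an edge. -/
def skipGraph (S : Set ℕ) : SimpleGraph ℕ where
  Adj m n := m ≠ n ∧ ∃ s ∈ S, ∃ k : ℕ,
    (m = 2 * k * s ∧ n = 2 * k * s + s) ∨ (n = 2 * k * s ∧ m = 2 * k * s + s)
  symm := ⟨by
    rintro m n ⟨hmn, s, hs, k, h⟩
    exact ⟨hmn.symm, s, hs, k, h.symm⟩⟩
  loopless := ⟨by
    rintro m ⟨hmm, -⟩
    exact hmm rfl⟩

/-- The edge `e` has skip size `s`, i.e. its endpoints differ by `s`. -/
def EdgeSkip (s : ℕ) (e : Sym2 ℕ) : Prop := ∃ m : ℕ, e = s(m, m + s)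

/-!
An edge of odd skip `s` joins a multiple `m` of `2s` to the odd vertex `m + s`, while the edges
of the even skip `a` join even vertices. As consecutive edges of a cycle have distinct skips,
parity forces a 5-cycle to use exactly one edge of skip `a`; its four odd skips `s₁ s₂ s₃ s₄`,
read in cyclic order, are consecutively distinct and satisfy `±a = s₂ + s₄ - s₁ - s₃`. If
`s₁ = s₃` (or, symmetrically, `s₂ = s₄`), reading off the divisibilities at the five vertices
gives the labeling `x = s₁`, `y = s₂`, `z = s₄`. Otherwise `s₄ = s₁` and `a = ±(s₂ - s₃)`, and a
sum `a + q = r` of skips always closes a triangle.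

Conversely, a labeling yields the pentagon `n + x - z, n + y - x, n + y, n, n + x` as soon as `n`
satisfies one congruence modulo each of `2y`, `2z`, `2a`; the labeling conditions are exactly the
pairwise compatibility of these congruences, so the Chinese remainder theorem provides `n`.
-/
open SimpleGraph

theorem Set.ncard_triple_eq_three_iff {α : Type*} {p q r : α} :
    ({p, q, r} : Set α).ncard = 3 ↔ p ≠ q ∧ p ≠ r ∧ q ≠ r := by
  refine ⟨fun h => ?_, fun ⟨hpq, hpr, hqr⟩ => Set.ncard_eq_three.2 ⟨p, q, r, hpq, hpr, hqr, rfl⟩⟩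
  have hpair : ∀ b c : α, ({b, c} : Set α).ncard ≠ 3 := fun b c h' => by
    have := Set.ncard_insert_le b {c}
    simp only [Set.ncard_singleton] at this
    omega
  refine ⟨?_, ?_, ?_⟩ <;> rintro rfl
  · exact hpair p r (by rwa [Set.insert_eq_of_mem (by simp)] at h)
  · exact hpair q p (by rwa [Set.insert_eq_of_mem (by simp)] at h)
  · exact hpair p q (by rwa [Set.pair_eq_singleton] at h)

theorem Set.triple_eq_of_mem {α : Type*} {p q r x y z : α} (hp : p ∈ ({x, y, z} : Set α))
    (hq : q ∈ ({x, y, z} : Set α)) (hr : r ∈ ({x, y, z} : Set α))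
    (hpq : p ≠ q) (hpr : p ≠ r) (hqr : q ≠ r) : ({p, q, r} : Set α) = {x, y, z} := by
  refine Set.eq_of_subset_of_ncard_le (by simp [Set.insert_subset_iff, hp, hq, hr]) ?_
  rw [Set.ncard_triple_eq_three_iff.2 ⟨hpq, hpr, hqr⟩]
  have hyz : ({y, z} : Set α).ncard ≤ 2 := by simpa using Set.ncard_insert_le y {z}
  exact (Set.ncard_insert_le _ _).trans (by omega)

theorem Nat.gcd_lcm_dvd_lcm_gcd_s8 (n m p : ℕ) : (n.lcm m).gcd p ∣ (n.gcd p).lcm (m.gcd p) := by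
  rcases eq_or_ne n 0 with rfl | hn
  · simpa using Nat.dvd_lcm_left p _
  rcases eq_or_ne m 0 with rfl | hm
  · simpa using Nat.dvd_lcm_right _ p
  rcases eq_or_ne p 0 with rfl | hp
  · simp
  rw [← Nat.factorization_le_iff_dvd (Nat.gcd_ne_zero_right hp)
    (Nat.lcm_ne_zero (Nat.gcd_ne_zero_right hp) (Nat.gcd_ne_zero_right hp)),
    Nat.factorization_gcd (Nat.lcm_ne_zero hn hm) hp, Nat.factorization_lcm hn hm,
    Nat.factorization_lcm (Nat.gcd_ne_zero_right hp) (Nat.gcd_ne_zero_right hp),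
    Nat.factorization_gcd hn hp, Nat.factorization_gcd hm hp]
  intro q
  simp only [Finsupp.inf_apply, Finsupp.sup_apply]
  omega

theorem exists_dvd_sub_of_gcd_dvd {n m : ℕ} {A B : ℤ} (h : (n.gcd m : ℤ) ∣ A - B) :
    ∃ k : ℤ, (n : ℤ) ∣ k - A ∧ (m : ℤ) ∣ k - B := by
  obtain ⟨c, hc⟩ := h
  refine ⟨A - n * n.gcdA m * c, ⟨-(n.gcdA m * c), by ring⟩, n.gcdB m * c, ?_⟩
  linear_combination hc + c * Nat.gcd_eq_gcd_ab n m

theorem exists_dvd_sub_three {n m p : ℕ} {A B C : ℤ} (hAB : (n.gcd m : ℤ) ∣ A - B)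
    (hAC : (n.gcd p : ℤ) ∣ A - C) (hBC : (m.gcd p : ℤ) ∣ B - C) :
    ∃ k : ℤ, (n : ℤ) ∣ k - A ∧ (m : ℤ) ∣ k - B ∧ (p : ℤ) ∣ k - C := by
  obtain ⟨k₁, hA, hB⟩ := exists_dvd_sub_of_gcd_dvd hAB
  have hnp : (n.gcd p : ℤ) ∣ k₁ - C := by
    simpa using ((Int.natCast_dvd_natCast.2 (Nat.gcd_dvd_left n p)).trans hA).add hAC
  have hmp : (m.gcd p : ℤ) ∣ k₁ - C := by
    simpa using ((Int.natCast_dvd_natCast.2 (Nat.gcd_dvd_left m p)).trans hB).add hBC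
  have hC : ((n.lcm m).gcd p : ℤ) ∣ k₁ - C := by
    rw [Int.natCast_dvd] at hnp hmp ⊢
    exact (Nat.gcd_lcm_dvd_lcm_gcd_s8 n m p).trans (Nat.lcm_dvd hnp hmp)
  obtain ⟨k, hk, hkC⟩ := exists_dvd_sub_of_gcd_dvd hC
  refine ⟨k, ?_, ?_, hkC⟩
  · simpa using ((Int.natCast_dvd_natCast.2 (Nat.dvd_lcm_left n m)).trans hk).add hA
  · simpa using ((Int.natCast_dvd_natCast.2 (Nat.dvd_lcm_right n m)).trans hk).add hB

theorem exists_nat_ge_dvd_sub {L : ℕ} (hL : L ≠ 0) (k : ℤ) (N : ℕ) :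
    ∃ K : ℕ, N ≤ K ∧ (L : ℤ) ∣ K - k := by
  have hr : 0 ≤ k % L := Int.emod_nonneg k (by exact_mod_cast hL)
  refine ⟨(k % L).toNat + N * L, ?_, ?_⟩
  · exact (Nat.le_mul_of_pos_right N (Nat.pos_of_ne_zero hL)).trans (Nat.le_add_left _ _)
  · push_cast [Int.toNat_of_nonneg hr]
    rw [show k % L + N * L - k = L * N - (k - k % L) by ring]
    exact (dvd_mul_right _ _).sub (Int.mod_modEq k L).dvd

theorem exists_nat_ge_dvd_sub_three {n m p : ℕ} (hn : n ≠ 0) (hm : m ≠ 0) (hp : p ≠ 0)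
    {A B C : ℤ} (hAB : (n.gcd m : ℤ) ∣ A - B) (hAC : (n.gcd p : ℤ) ∣ A - C)
    (hBC : (m.gcd p : ℤ) ∣ B - C) (N : ℕ) :
    ∃ K : ℕ, N ≤ K ∧ (n : ℤ) ∣ K - A ∧ (m : ℤ) ∣ K - B ∧ (p : ℤ) ∣ K - C := by
  obtain ⟨k, hA, hB, hC⟩ := exists_dvd_sub_three hAB hAC hBC
  obtain ⟨K, hNK, hK⟩ := exists_nat_ge_dvd_sub (mul_ne_zero (mul_ne_zero hn hm) hp) k N
  push_cast at hK
  refine ⟨K, hNK, ?_, ?_, ?_⟩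
  · simpa using ((Dvd.intro (m * p : ℤ) (by ring)).trans hK).add hA
  · simpa using ((Dvd.intro (n * p : ℤ) (by ring)).trans hK).add hB
  · simpa using ((Dvd.intro_left (n * m : ℤ) rfl).trans hK).add hC

theorem two_mul_gcd_dvd {u v : ℕ} {t : ℤ} (hg : Odd (u.gcd v)) (h : (u.gcd v : ℤ) ∣ t)
    (ht : 2 ∣ t) : ((2 * u).gcd (2 * v) : ℤ) ∣ t := by
  rw [Nat.gcd_mul_left, Int.natCast_dvd] at *
  exact Nat.Coprime.mul_dvd_of_dvd_of_dvd (Nat.coprime_two_left.2 hg) (Int.natCast_dvd.1 ht) h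

theorem odd_of_padicValNat_two_eq_zero {n : ℕ} (hn : n ≠ 0) (h : padicValNat 2 n = 0) :
    Odd n := by
  rcases padicValNat.eq_zero_iff.1 h with h | h | h
  · omega
  · omega
  · exact Nat.odd_iff.2 (by omega)

theorem two_dvd_and_odd_of_padicValNat_two {a x y z : ℕ} (hx : 0 < x) (hy : 0 < y) (hz : 0 < z)
    (hxa : padicValNat 2 x < padicValNat 2 a)
    (hxey : padicValNat 2 x = padicValNat 2 y) (hxez : padicValNat 2 x = padicValNat 2 z)
    (hred : Nat.gcd (Nat.gcd a x) (Nat.gcd y z) = 1) :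
    2 ∣ a ∧ ∀ s ∈ ({x, y, z} : Set ℕ), Odd s := by
  have two_dvd {n : ℕ} (h : 1 ≤ padicValNat 2 n) : 2 ∣ n := dvd_of_one_le_padicValNat h
  have ha2 : 2 ∣ a := two_dvd (by omega)
  have hx2 : padicValNat 2 x = 0 := by
    by_contra h
    have := Nat.dvd_gcd (Nat.dvd_gcd ha2 (two_dvd (n := x) (by omega)))
      (Nat.dvd_gcd (two_dvd (n := y) (by omega)) (two_dvd (n := z) (by omega)))
    rw [hred] at this
    omega
  refine ⟨ha2, ?_⟩
  rintro s (rfl | rfl | rfl) <;> exact odd_of_padicValNat_two_eq_zero (by omega) (by omega)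

section Pentagon

variable {V : Type*}

def IsPentagon (G : SimpleGraph V) (v₀ v₁ v₂ v₃ v₄ : V) : Prop :=
  G.Adj v₀ v₁ ∧ G.Adj v₁ v₂ ∧ G.Adj v₂ v₃ ∧ G.Adj v₃ v₄ ∧ G.Adj v₄ v₀ ∧
    v₀ ≠ v₂ ∧ v₀ ≠ v₃ ∧ v₁ ≠ v₃ ∧ v₁ ≠ v₄ ∧ v₂ ≠ v₄

theorem IsPentagon.rotate {G : SimpleGraph V} {v₀ v₁ v₂ v₃ v₄ : V}
    (h : IsPentagon G v₀ v₁ v₂ v₃ v₄) : IsPentagon G v₁ v₂ v₃ v₄ v₀ := by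
  obtain ⟨h₀₁, h₁₂, h₂₃, h₃₄, h₄₀, h₀₂, h₀₃, h₁₃, h₁₄, h₂₄⟩ := h
  exact ⟨h₁₂, h₂₃, h₃₄, h₄₀, h₀₁, h₁₃, h₁₄, h₂₄, h₀₂.symm, h₀₃.symm⟩

theorem exists_isCycle_length_five_iff (G : SimpleGraph V) :
    (∃ (v : V) (c : G.Walk v v), c.IsCycle ∧ c.length = 5) ↔
      ∃ v₀ v₁ v₂ v₃ v₄, IsPentagon G v₀ v₁ v₂ v₃ v₄ := by
  constructor
  · rintro ⟨v, c, hc, hl⟩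
    match c, hc, hl with
    | .cons h₀₁ (.cons h₁₂ (.cons h₂₃ (.cons h₃₄ (.cons h₄₀ .nil)))), hc, _ =>
      have hn := hc.support_nodup
      simp only [Walk.support_cons, Walk.support_nil, List.tail_cons, List.nodup_cons,
        List.mem_cons, List.not_mem_nil, or_false, List.nodup_nil, and_true, not_or] at hn
      exact ⟨_, _, _, _, _, h₀₁, h₁₂, h₂₃, h₃₄, h₄₀, by tauto⟩
  · rintro ⟨v₀, v₁, v₂, v₃, v₄, h₀₁, h₁₂, h₂₃, h₃₄, h₄₀, h₀₂, h₀₃, h₁₃, h₁₄, h₂₄⟩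
    refine ⟨v₀, .cons h₀₁ (.cons h₁₂ (.cons h₂₃ (.cons h₃₄ (.cons h₄₀ .nil)))), ?_, rfl⟩
    have := h₀₁.ne; have := h₁₂.ne; have := h₂₃.ne; have := h₃₄.ne; have := h₄₀.ne
    simp [Walk.cons_isCycle_iff, *, Ne.symm]

end Pentagon

def SkipAdj (s u w : ℕ) : Prop := (w = u + s ∧ 2 * s ∣ u) ∨ (u = w + s ∧ 2 * s ∣ w)

namespace SkipAdj

variable {s u w w' : ℕ}

theorem symm (h : SkipAdj s u w) : SkipAdj s w u := Or.symm h

theorem dvd (h : SkipAdj s u w) : s ∣ u ∧ s ∣ w := by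
  have hs : s ∣ 2 * s := dvd_mul_left s 2
  rcases h with ⟨rfl, h⟩ | ⟨rfl, h⟩
  · exact ⟨hs.trans h, (hs.trans h).add dvd_rfl⟩
  · exact ⟨(hs.trans h).add dvd_rfl, hs.trans h⟩

theorem two_dvd_lower (h : SkipAdj s u w) : (w = u + s ∧ 2 ∣ u) ∨ (u = w + s ∧ 2 ∣ w) := by
  have h2 : 2 ∣ 2 * s := dvd_mul_right 2 s
  rcases h with ⟨e, h⟩ | ⟨e, h⟩
  · exact .inl ⟨e, h2.trans h⟩
  · exact .inr ⟨e, h2.trans h⟩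

theorem right_eq (hs : 0 < s) (h : SkipAdj s u w) (h' : SkipAdj s u w') : w = w' := by
  have h2 : ∀ {m n}, 2 * s ∣ m → 2 * s ∣ n → m ≠ n + s := fun hm hn e => by
    have := Nat.le_of_dvd hs ((Nat.dvd_add_right hn).mp (e ▸ hm))
    omega
  rcases h with ⟨rfl, h⟩ | ⟨rfl, h⟩ <;> rcases h' with ⟨e, h'⟩ | ⟨e, h'⟩
  · exact e.symm
  · exact absurd e (h2 h h')
  · exact absurd rfl (h2 h' h)
  · omega

theorem orient (hs : Odd s) (h : SkipAdj s u w) (hu : 2 ∣ u) : w = u + s ∧ 2 * s ∣ u := by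
  refine h.resolve_right fun ⟨e, h⟩ => ?_
  have := (dvd_mul_right 2 s).trans h
  obtain ⟨j, rfl⟩ := hs
  omega

end SkipAdj

theorem skipGraph_adj_iff {S : Set ℕ} {m n : ℕ} :
    (skipGraph S).Adj m n ↔ ∃ s ∈ S, 0 < s ∧ SkipAdj s m n := by
  constructor
  · rintro ⟨hmn, s, hs, k, h⟩
    refine ⟨s, hs, Nat.pos_of_ne_zero fun hs0 => hmn ?_, ?_⟩
    · rcases h with ⟨rfl, rfl⟩ | ⟨rfl, rfl⟩ <;> simp [hs0]
    · rcases h with ⟨rfl, rfl⟩ | ⟨rfl, rfl⟩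
      · exact .inl ⟨rfl, k, by ring⟩
      · exact .inr ⟨rfl, k, by ring⟩
  · rintro ⟨s, hs, hs0, (⟨rfl, k, hk⟩ | ⟨rfl, k, hk⟩)⟩
    · exact ⟨by omega, s, hs, k, .inl ⟨by rw [hk]; ring, by rw [hk]; ring⟩⟩
    · exact ⟨by omega, s, hs, k, .inr ⟨by rw [hk]; ring, by rw [hk]; ring⟩⟩

theorem skipGraph_adj_of_dvd {S : Set ℕ} {s u w : ℕ} (hs : s ∈ S) (hs0 : 0 < s)
    (hw : w = u + s) (hu : ((2 * s : ℕ) : ℤ) ∣ u) : (skipGraph S).Adj u w :=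
  skipGraph_adj_iff.2 ⟨s, hs, hs0, .inl ⟨hw, Int.natCast_dvd_natCast.1 hu⟩⟩

theorem exists_isCycle_length_three_of_add_eq {S : Set ℕ} {a q r : ℕ} (haS : a ∈ S)
    (hqS : q ∈ S) (hrS : r ∈ S) (ha : 0 < a) (ha2 : 2 ∣ a) (hq : Odd q) (hr : Odd r)
    (h : a + q = r) : ∃ (v : ℕ) (c : (skipGraph S).Walk v v), c.IsCycle ∧ c.length = 3 := by
  have hga : Odd (a.gcd q) := hq.of_dvd_nat (Nat.gcd_dvd_right a q)
  have hgr : Odd (r.gcd q) := hq.of_dvd_nat (Nat.gcd_dvd_right r q)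
  have hgra : (r.gcd q : ℤ) ∣ a := by
    have := (Int.natCast_dvd_natCast.2 (Nat.gcd_dvd_left r q)).sub
      (Int.natCast_dvd_natCast.2 (Nat.gcd_dvd_right r q))
    rwa [show (r : ℤ) - q = a by omega] at this
  have ha2' : (2 : ℤ) ∣ a := by exact_mod_cast ha2
  -- the triangle `k, k + a, k + r` needs `2a ∣ k`, `2r ∣ k` and `2q ∣ k + a`
  obtain ⟨k, -, hka, hkr, hkq⟩ := exists_nat_ge_dvd_sub_three (n := 2 * a) (m := 2 * r)
    (p := 2 * q) (A := 0) (B := 0) (C := -a) (by omega) (by have := hr.pos; omega)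
    (by have := hq.pos; omega) (by simp)
    (two_mul_gcd_dvd hga (by simpa using Int.natCast_dvd_natCast.2 (Nat.gcd_dvd_left a q))
      (by simpa using ha2'))
    (two_mul_gcd_dvd hgr (by simpa using hgra) (by simpa using ha2')) 0
  have h₁ : (skipGraph S).Adj k (k + a) := skipGraph_adj_of_dvd haS ha rfl (by simpa using hka)
  have h₂ : (skipGraph S).Adj (k + a) (k + r) :=
    skipGraph_adj_of_dvd hqS hq.pos (by omega) (by simpa using hkq)
  have h₃ : (skipGraph S).Adj k (k + r) := skipGraph_adj_of_dvd hrS hr.pos rfl (by simpa using hkr)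
  exact is3Clique_iff_exists_cycle_length_three.1 ⟨_, is3Clique_triple_iff.2 ⟨h₁, h₃, h₂⟩⟩

def FiveCycleCondition (a p q r : ℕ) : Prop :=
  ((a : ℤ) = 2 * p - q - r ∨ (a : ℤ) = q + r - 2 * p) ∧ p ∣ q ∧ Nat.gcd q r ∣ p ∧ Nat.gcd a q ∣ p

theorem fiveCycleCondition_of_eq {a p q r v₀ v₁ v₂ v₃ v₄ : ℕ}
    (h₀₁ : v₁ = v₀ + a ∨ v₀ = v₁ + a) (h₁₂ : v₂ = v₁ + p) (h₃₂ : v₂ = v₃ + q)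
    (h₃₄ : v₄ = v₃ + p) (h₀₄ : v₄ = v₀ + r)
    (ha : a ∣ v₁) (hp₁ : p ∣ v₁) (hp₃ : p ∣ v₃) (hq : q ∣ v₃) (hr : r ∣ v₀) :
    FiveCycleCondition a p q r := by
  refine ⟨by omega, ?_, ?_, ?_⟩
  · refine (Nat.dvd_add_right hp₃).mp ?_
    rw [← h₃₂, h₁₂]
    exact hp₁.add dvd_rfl
  · refine (Nat.dvd_add_right ((Nat.gcd_dvd_left q r).trans hq)).mp ?_
    rw [← h₃₄, h₀₄]
    exact ((Nat.gcd_dvd_right q r).trans hr).add (Nat.gcd_dvd_right q r)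
  · refine (Nat.dvd_add_right ((Nat.gcd_dvd_left a q).trans ha)).mp ?_
    rw [← h₁₂, h₃₂]
    exact ((Nat.gcd_dvd_right a q).trans hq).add (Nat.gcd_dvd_right a q)

section OneEven

variable {a x y z : ℕ}

theorem exists_odd_skips_of_isPentagon {v₀ v₁ v₂ v₃ v₄ : ℕ} (ha : 2 ∣ a)
    (hodd : ∀ s ∈ ({x, y, z} : Set ℕ), Odd s)
    (hP : IsPentagon (skipGraph {a, x, y, z}) v₀ v₁ v₂ v₃ v₄) (h₀₁ : SkipAdj a v₀ v₁) :
    ∃ s₁ ∈ ({x, y, z} : Set ℕ), ∃ s₂ ∈ ({x, y, z} : Set ℕ), ∃ s₃ ∈ ({x, y, z} : Set ℕ),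
      ∃ s₄ ∈ ({x, y, z} : Set ℕ), v₂ = v₁ + s₁ ∧ v₂ = v₃ + s₂ ∧ v₄ = v₃ + s₃ ∧ v₄ = v₀ + s₄ ∧
        2 * s₁ ∣ v₁ ∧ 2 * s₂ ∣ v₃ ∧ 2 * s₃ ∣ v₃ ∧ 2 * s₄ ∣ v₀ := by
  obtain ⟨-, A₁₂, A₂₃, A₃₄, A₄₀, d₀₂, -, -, d₁₄, -⟩ := hP
  obtain ⟨s₁, hs₁, hs₁0, h₁₂⟩ := skipGraph_adj_iff.1 A₁₂
  obtain ⟨s₂, hs₂, -, h₂₃⟩ := skipGraph_adj_iff.1 A₂₃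
  obtain ⟨s₃, hs₃, -, h₃₄⟩ := skipGraph_adj_iff.1 A₃₄
  obtain ⟨s₄, hs₄, hs₄0, h₄₀⟩ := skipGraph_adj_iff.1 A₄₀
  have e₀₁ := h₀₁.two_dvd_lower
  have hs₁T : s₁ ∈ ({x, y, z} : Set ℕ) :=
    hs₁.resolve_left (by rintro rfl; exact d₀₂ (h₀₁.symm.right_eq hs₁0 h₁₂))
  have hs₄T : s₄ ∈ ({x, y, z} : Set ℕ) :=
    hs₄.resolve_left (by rintro rfl; exact d₁₄ (h₀₁.right_eq hs₄0 h₄₀.symm))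
  have o₁ := Nat.odd_iff.1 (hodd _ hs₁T)
  have o₄ := Nat.odd_iff.1 (hodd _ hs₄T)
  obtain ⟨e₁₂, d₁⟩ := h₁₂.orient (hodd _ hs₁T) (by omega)
  obtain ⟨e₀₄, d₄⟩ := h₄₀.symm.orient (hodd _ hs₄T) (by omega)
  have hs₂T : s₂ ∈ ({x, y, z} : Set ℕ) :=
    hs₂.resolve_left fun e => by have := (e ▸ h₂₃).two_dvd_lower; omega
  have hs₃T : s₃ ∈ ({x, y, z} : Set ℕ) :=
    hs₃.resolve_left fun e => by have := (e ▸ h₃₄).two_dvd_lower; omega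
  have o₂ := Nat.odd_iff.1 (hodd _ hs₂T)
  have hv₃ : 2 ∣ v₃ := by have := h₂₃.two_dvd_lower; omega
  obtain ⟨e₃₂, d₂⟩ := h₂₃.symm.orient (hodd _ hs₂T) hv₃
  obtain ⟨e₃₄, d₃⟩ := h₃₄.orient (hodd _ hs₃T) hv₃
  exact ⟨s₁, hs₁T, s₂, hs₂T, s₃, hs₃T, s₄, hs₄T, e₁₂, e₃₂, e₃₄, e₀₄, d₁, d₂, d₃, d₄⟩

theorem fiveCycleCondition_of_isPentagon_of_skipAdj {v₀ v₁ v₂ v₃ v₄ : ℕ} (ha : 2 ∣ a)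
    (hodd : ∀ s ∈ ({x, y, z} : Set ℕ), Odd s)
    (hsum : ∀ q ∈ ({x, y, z} : Set ℕ), ∀ r ∈ ({x, y, z} : Set ℕ), a + q ≠ r)
    (hP : IsPentagon (skipGraph {a, x, y, z}) v₀ v₁ v₂ v₃ v₄) (h₀₁ : SkipAdj a v₀ v₁) :
    ∃ p q r, ({p, q, r} : Set ℕ) = {x, y, z} ∧ FiveCycleCondition a p q r := by
  obtain ⟨s₁, hs₁, s₂, hs₂, s₃, hs₃, s₄, hs₄, e₁₂, e₃₂, e₃₄, e₀₄, d₁, d₂, d₃, d₄⟩ :=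
    exists_odd_skips_of_isPentagon ha hodd hP h₀₁
  obtain ⟨-, -, -, -, -, -, d₀₃, d₁₃, -, d₂₄⟩ := hP
  have dvd_of_two_mul {s v : ℕ} (h : 2 * s ∣ v) : s ∣ v := (dvd_mul_left s 2).trans h
  have e₀₁ : v₁ = v₀ + a ∨ v₀ = v₁ + a := by have := h₀₁.two_dvd_lower; omega
  have ha₀ := h₀₁.dvd
  by_cases h₁₃ : s₁ = s₃
  · subst h₁₃
    have hc := fiveCycleCondition_of_eq e₀₁ e₁₂ e₃₂ e₃₄ e₀₄ ha₀.2 (dvd_of_two_mul d₁)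
      (dvd_of_two_mul d₃) (dvd_of_two_mul d₂) (dvd_of_two_mul d₄)
    have h₂₄ : s₂ ≠ s₄ := by
      rintro rfl
      have := Nat.dvd_antisymm hc.2.1 (by simpa using hc.2.2.1)
      omega
    exact ⟨s₁, s₂, s₄, Set.triple_eq_of_mem hs₁ hs₂ hs₄ (by omega) (by omega) h₂₄, hc⟩
  by_cases h₂₄ : s₂ = s₄
  · subst h₂₄
    have hc := fiveCycleCondition_of_eq e₀₁.symm e₀₄ e₃₄ e₃₂ e₁₂ ha₀.1 (dvd_of_two_mul d₄)
      (dvd_of_two_mul d₂) (dvd_of_two_mul d₃) (dvd_of_two_mul d₁)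
    exact ⟨s₂, s₃, s₁, Set.triple_eq_of_mem hs₂ hs₃ hs₁ (by omega) (by omega) (Ne.symm h₁₃), hc⟩
  have h₄₁ : s₄ = s₁ := by
    rw [← Set.triple_eq_of_mem hs₁ hs₂ hs₃ (by omega) h₁₃ (by omega)] at hs₄
    rcases hs₄ with h | h | rfl <;> omega
  rcases e₀₁ with h | h
  · exact absurd (by omega) (hsum s₃ hs₃ s₂ hs₂)
  · exact absurd (by omega) (hsum s₂ hs₂ s₃ hs₃)

theorem fiveCycleCondition_of_isPentagon {v₀ v₁ v₂ v₃ v₄ : ℕ} (ha : 2 ∣ a)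
    (hodd : ∀ s ∈ ({x, y, z} : Set ℕ), Odd s)
    (hsum : ∀ q ∈ ({x, y, z} : Set ℕ), ∀ r ∈ ({x, y, z} : Set ℕ), a + q ≠ r)
    (hP : IsPentagon (skipGraph {a, x, y, z}) v₀ v₁ v₂ v₃ v₄) :
    ∃ p q r, ({p, q, r} : Set ℕ) = {x, y, z} ∧ FiveCycleCondition a p q r := by
  have core := @fiveCycleCondition_of_isPentagon_of_skipAdj a x y z
  have ⟨A₀₁, A₁₂, A₂₃, A₃₄, A₄₀, _⟩ := hP
  obtain ⟨s₀, hs₀, -, h₀⟩ := skipGraph_adj_iff.1 A₀₁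
  obtain ⟨s₁, hs₁, -, h₁⟩ := skipGraph_adj_iff.1 A₁₂
  obtain ⟨s₂, hs₂, -, h₂⟩ := skipGraph_adj_iff.1 A₂₃
  obtain ⟨s₃, hs₃, -, h₃⟩ := skipGraph_adj_iff.1 A₃₄
  obtain ⟨s₄, hs₄, -, h₄⟩ := skipGraph_adj_iff.1 A₄₀
  -- an odd cycle cannot use only odd skips, since each of them changes the parity
  have : s₀ = a ∨ s₁ = a ∨ s₂ = a ∨ s₃ = a ∨ s₄ = a := by
    by_contra! hne
    have o := fun s (hs : s ∈ ({a, x, y, z} : Set ℕ)) (h : s ≠ a) =>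
      Nat.odd_iff.1 (hodd s (hs.resolve_left h))
    have := o _ hs₀ hne.1; have := o _ hs₁ hne.2.1; have := o _ hs₂ hne.2.2.1
    have := o _ hs₃ hne.2.2.2.1; have := o _ hs₄ hne.2.2.2.2
    have := h₀.two_dvd_lower; have := h₁.two_dvd_lower; have := h₂.two_dvd_lower
    have := h₃.two_dvd_lower; have := h₄.two_dvd_lower
    omega
  rcases this with rfl | rfl | rfl | rfl | rfl
  · exact core ha hodd hsum hP h₀
  · exact core ha hodd hsum hP.rotate h₁
  · exact core ha hodd hsum hP.rotate.rotate h₂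
  · exact core ha hodd hsum hP.rotate.rotate.rotate h₃
  · exact core ha hodd hsum hP.rotate.rotate.rotate.rotate h₄

end OneEven

theorem isPentagon_of_base {S : Set ℕ} {p q r n : ℕ} (hpS : p ∈ S) (hqS : q ∈ S) (hrS : r ∈ S)
    (hq : Odd q) (hr : Odd r) (hpq : p ≠ q) (hpr : p ≠ r) (hdvd : p ∣ q) (hn : r ≤ n)
    (hnq : ((2 * q : ℕ) : ℤ) ∣ n) (hnr : ((2 * r : ℕ) : ℤ) ∣ n - (r - p))
    (hedge : (skipGraph S).Adj (n + p - r) (n + q - p)) :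
    IsPentagon (skipGraph S) (n + p - r) (n + q - p) (n + q) n (n + p) := by
  obtain ⟨c, hc⟩ := hdvd
  have hp : Odd p := hq.of_dvd_nat ⟨c, hc⟩
  obtain ⟨j, hj⟩ : Odd c := (Nat.odd_mul.1 (hc ▸ hq)).2
  have hpq_le : p ≤ q := Nat.le_of_dvd hq.pos ⟨c, hc⟩
  have hp2 := Nat.odd_iff.1 hp
  have hq2 := Nat.odd_iff.1 hq
  have hr2 := Nat.odd_iff.1 hr
  have hnp : ((2 * p : ℕ) : ℤ) ∣ n :=
    (Int.natCast_dvd_natCast.2 (Nat.mul_dvd_mul_left 2 ⟨c, hc⟩)).trans hnq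
  refine ⟨hedge, skipGraph_adj_of_dvd hpS hp.pos (by omega) ?_,
    (skipGraph_adj_of_dvd hqS hq.pos rfl hnq).symm, skipGraph_adj_of_dvd hpS hp.pos rfl hnp,
    (skipGraph_adj_of_dvd hrS hr.pos (by omega) ?_).symm, by omega, by omega, by omega,
    by omega, by omega⟩
  · rw [show ((n + q - p : ℕ) : ℤ) = n + (q - p) by omega]
    exact hnp.add ⟨j, by rw [hc, hj]; push_cast; ring⟩
  · convert hnr using 1
    omega

theorem exists_isPentagon_of_fiveCycleCondition {S : Set ℕ} {a p q r : ℕ} (haS : a ∈ S)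
    (hpS : p ∈ S) (hqS : q ∈ S) (hrS : r ∈ S) (ha : 0 < a) (ha2 : 2 ∣ a) (hq : Odd q)
    (hr : Odd r) (hpq : p ≠ q) (hpr : p ≠ r) (h : FiveCycleCondition a p q r) :
    ∃ v₀ v₁ v₂ v₃ v₄, IsPentagon (skipGraph S) v₀ v₁ v₂ v₃ v₄ := by
  obtain ⟨hsign, hdvd, hgqr, hgaq⟩ := h
  have hpq_le : p ≤ q := Nat.le_of_dvd hq.pos hdvd
  have hp2 := Nat.odd_iff.1 (hq.of_dvd_nat hdvd)
  have hq2 := Nat.odd_iff.1 hq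
  have hr2 := Nat.odd_iff.1 hr
  have hga : Odd (q.gcd a) := hq.of_dvd_nat (Nat.gcd_dvd_left q a)
  have hgap : (q.gcd a : ℤ) ∣ p := by exact_mod_cast Nat.gcd_comm q a ▸ hgaq
  have cast_dvd {d m : ℕ} (h : d ∣ m) : (d : ℤ) ∣ m := Int.natCast_dvd_natCast.2 h
  -- besides `2q ∣ n` and `2r ∣ n - (r - p)`, the base point `n` of the pentagon needs one
  -- congruence modulo `2a`, which depends on the sign
  obtain ⟨C, hqa, hra, hedge⟩ : ∃ C : ℤ, (((2 * q).gcd (2 * a) : ℕ) : ℤ) ∣ 0 - C ∧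
      (((2 * r).gcd (2 * a) : ℕ) : ℤ) ∣ (r - p) - C ∧ ∀ n : ℕ, r ≤ n →
        ((2 * a : ℕ) : ℤ) ∣ n - C → (skipGraph S).Adj (n + p - r) (n + q - p) := by
    rcases hsign with hsign | hsign
    · refine ⟨p - q, two_mul_gcd_dvd hga ?_ (by omega), two_mul_gcd_dvd ?_ ?_ (by omega),
        fun n hn hna => (skipGraph_adj_of_dvd haS ha (by omega) ?_).symm⟩
      · simpa using (cast_dvd (Nat.gcd_dvd_left q a)).sub hgap
      · exact hr.of_dvd_nat (Nat.gcd_dvd_left r a)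
      · rw [show (r : ℤ) - p - (p - q) = -a by omega]
        exact (cast_dvd (Nat.gcd_dvd_right r a)).neg_right
      · convert hna using 1
        omega
    · have hgar : (q.gcd a : ℤ) ∣ r := by
        rw [show (r : ℤ) = a + 2 * p - q by omega]
        exact ((cast_dvd (Nat.gcd_dvd_right q a)).add (hgap.mul_left 2)).sub
          (cast_dvd (Nat.gcd_dvd_left q a))
      refine ⟨r - p, two_mul_gcd_dvd hga ?_ (by omega), by simp,
        fun n hn hna => skipGraph_adj_of_dvd haS ha (by omega) ?_⟩
      · simpa using hgap.sub hgar
      · convert hna using 1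
        omega
  obtain ⟨n, hn, hnq, hnr, hna⟩ := exists_nat_ge_dvd_sub_three (n := 2 * q) (m := 2 * r)
    (p := 2 * a) (A := 0) (B := r - p) (C := C) (by omega) (by omega) (by omega)
    (two_mul_gcd_dvd (hq.of_dvd_nat (Nat.gcd_dvd_left q r))
      (by simpa using (cast_dvd hgqr).sub (cast_dvd (Nat.gcd_dvd_right q r))) (by omega))
    hqa hra r
  rw [sub_zero] at hnq
  exact ⟨_, _, _, _, _, isPentagon_of_base hpS hqS hrS hq hr hpq hpr hdvd hn hnq hnr
    (hedge n hn hna)⟩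

/-- Given a reduced skip set `{a, x, y, z}` with `ν₂(a) > ν₂(x) = ν₂(y) = ν₂(z)` producing no
3-cycle, the skip graph contains a 5-cycle if and only if the odd elements can be labeled
`x, y, z` so that `a = ±(2x − y − z)`, `x ∣ y`, `gcd(y, z) ∣ x` and `gcd(a, y) ∣ x`. -/
theorem five_cycle_from_one_even (a x y z : ℕ) (ha : 0 < a) (hx : 0 < x) (hy : 0 < y)
    (hz : 0 < z) (hxy : x ≠ y) (hxz : x ≠ z) (hyz : y ≠ z)
    (hxa : padicValNat 2 x < padicValNat 2 a)
    (hxey : padicValNat 2 x = padicValNat 2 y) (hxez : padicValNat 2 x = padicValNat 2 z)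
    (hred : Nat.gcd (Nat.gcd a x) (Nat.gcd y z) = 1)
    (hno3 : ¬ ∃ (v : ℕ) (c : (skipGraph ({a, x, y, z} : Set ℕ)).Walk v v),
      c.IsCycle ∧ c.length = 3) :
    (∃ (v : ℕ) (c : (skipGraph ({a, x, y, z} : Set ℕ)).Walk v v), c.IsCycle ∧ c.length = 5) ↔
      ∃ x' y' z' : ℕ, ({x', y', z'} : Set ℕ) = {x, y, z} ∧
        ((a : ℤ) = 2 * x' - y' - z' ∨ (a : ℤ) = y' + z' - 2 * x') ∧
        x' ∣ y' ∧ Nat.gcd y' z' ∣ x' ∧ Nat.gcd a y' ∣ x' := by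
  obtain ⟨ha2, hodd⟩ := two_dvd_and_odd_of_padicValNat_two hx hy hz hxa hxey hxez hred
  have hsum : ∀ q ∈ ({x, y, z} : Set ℕ), ∀ r ∈ ({x, y, z} : Set ℕ), a + q ≠ r :=
    fun q hq r hr h => hno3 (exists_isCycle_length_three_of_add_eq (.inl rfl) (.inr hq)
      (.inr hr) ha ha2 (hodd q hq) (hodd r hr) h)
  rw [exists_isCycle_length_five_iff]
  constructor
  · rintro ⟨v₀, v₁, v₂, v₃, v₄, hP⟩
    exact fiveCycleCondition_of_isPentagon ha2 hodd hsum hP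
  · rintro ⟨p, q, r, hset, h⟩
    have hmem : ∀ s ∈ ({p, q, r} : Set ℕ), s ∈ ({x, y, z} : Set ℕ) := fun s hs => hset ▸ hs
    obtain ⟨hpq, hpr, -⟩ := Set.ncard_triple_eq_three_iff.1
      (hset ▸ Set.ncard_triple_eq_three_iff.2 ⟨hxy, hxz, hyz⟩)
    exact exists_isPentagon_of_fiveCycleCondition (.inl rfl) (.inr (hmem p (by simp)))
      (.inr (hmem q (by simp))) (.inr (hmem r (by simp))) ha ha2 (hodd q (hmem q (by simp)))
      (hodd r (hmem r (by simp))) hpq hpr h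
end

section
/- Suppose a weakly realizable signed pattern contains two consecutive entries εa followed by ε′b (with a, b positive integers and ε, ε′ ∈ {+1, −1}). Then: if ν₂(a) > ν₂(b), then ε′ = +1; if ν₂(a) < ν₂(b), then ε = −1; and if ν₂(a) = ν₂(b), then ε = −ε′. -/
/-! Let `Y` be the term between the two steps. The step `εa` makes `Y` an odd multiple of `a`
when `ε = 1` and an even multiple of `a` when `ε = -1`; the step `ε'b` requires `Y` to be an even
multiple of `b` when `ε' = 1` and an odd multiple when `ε' = -1`. An odd multiple of `a` has the
2-adic valuation of `a` (and is nonzero), an even multiple of `b` has a strictly larger one than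
`b` (or is zero), so each of the four sign combinations pins down how `ν₂(a)` and `ν₂(b)` compare. -/

lemma padicValInt_two_odd_mul (k : ℤ) {a : ℤ} (ha : a ≠ 0) :
    padicValInt 2 ((2 * k + 1) * a) = padicValInt 2 a := by
  rw [padicValInt.mul (by omega) ha, padicValInt.eq_zero_of_not_dvd (by omega), zero_add]

lemma padicValInt_two_lt_of_odd_mul_eq_even_mul {a b k m : ℤ} (ha : a ≠ 0) (hb : b ≠ 0)
    (h : (2 * k + 1) * a = 2 * m * b) : padicValInt 2 b < padicValInt 2 a := by
  have hm : m ≠ 0 := by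
    rintro rfl
    simp only [mul_zero, zero_mul, mul_eq_zero] at h
    omega
  have hval := congrArg (padicValInt 2) h
  rw [padicValInt_two_odd_mul k ha, show 2 * m * b = m * b * (2 : ℕ) by push_cast; ring,
    padicValInt_mul_eq_succ _ (mul_ne_zero hm hb), padicValInt.mul hm hb] at hval
  omega

lemma padicValInt_two_eq_of_odd_mul_eq_odd_mul {a b k m : ℤ} (ha : a ≠ 0) (hb : b ≠ 0)
    (h : (2 * k + 1) * a = (2 * m + 1) * b) : padicValInt 2 a = padicValInt 2 b := by
  simpa only [padicValInt_two_odd_mul _ ha, padicValInt_two_odd_mul _ hb] using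
    congrArg (padicValInt 2) h

lemma patTerm_succ (T : ℤ) {p : List (ℤ × ℕ)} {i : ℕ} (hi : i < p.length) :
    patTerm T p (i + 1) = patTerm T p i + p[i].1 * p[i].2 := by
  rw [patTerm, patTerm, List.take_add_one, List.getElem?_eq_getElem hi]
  simp only [stepSum, Option.toList_some, List.map_append, List.map_singleton, List.sum_append,
    List.sum_singleton, add_assoc]

namespace WeaklyRealizableFrom

variable {T : ℤ} {p : List (ℤ × ℕ)} {i : ℕ}

lemma exists_odd_mul_of_getElem_eq (h : WeaklyRealizableFrom T p) (hi : i < p.length) {a : ℕ}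
    (hpi : p[i] = (1, a)) : ∃ k : ℤ, patTerm T p (i + 1) = (2 * k + 1) * a := by
  obtain ⟨k, hk⟩ := (h.2.2 i hi).1 (by simp [hpi])
  refine ⟨k, ?_⟩
  simp only [patTerm_succ T hi, List.get_eq_getElem, hpi] at hk ⊢
  rw [hk]
  ring

lemma exists_even_mul_of_getElem_eq (h : WeaklyRealizableFrom T p) (hi : i < p.length) {a : ℕ}
    (hpi : p[i] = (-1, a)) : ∃ k : ℤ, patTerm T p (i + 1) = 2 * k * a := by
  obtain ⟨k, hk⟩ := (h.2.2 i hi).2 (by simp [hpi])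
  refine ⟨k, ?_⟩
  simp only [patTerm_succ T hi, List.get_eq_getElem, hpi] at hk ⊢
  rw [hk]
  ring

theorem sign_constraints (h : WeaklyRealizableFrom T p) (hi : i + 1 < p.length)
    {ε ε' : ℤ} {a b : ℕ} (hpi : p[i] = (ε, a)) (hpi' : p[i + 1] = (ε', b))
    (hε : ε = 1 ∨ ε = -1) (hε' : ε' = 1 ∨ ε' = -1) (ha : 0 < a) (hb : 0 < b) :
    (padicValNat 2 b < padicValNat 2 a → ε' = 1) ∧
    (padicValNat 2 a < padicValNat 2 b → ε = -1) ∧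
    (padicValNat 2 a = padicValNat 2 b → ε = -ε') := by
  have hi₀ : i < p.length := by omega
  have ha' : (a : ℤ) ≠ 0 := by positivity
  have hb' : (b : ℤ) ≠ 0 := by positivity
  have hstep := h.2.2 (i + 1) hi
  simp only [List.get_eq_getElem, hpi'] at hstep
  simp only [← @padicValInt.of_nat 2]
  rcases hε with rfl | rfl <;> rcases hε' with rfl | rfl
  · obtain ⟨k, hk⟩ := h.exists_odd_mul_of_getElem_eq hi₀ hpi
    obtain ⟨m, hm⟩ := hstep.1 rfl
    have := padicValInt_two_lt_of_odd_mul_eq_even_mul ha' hb' (hk.symm.trans hm)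
    refine ⟨fun _ => rfl, ?_, ?_⟩ <;> omega
  · obtain ⟨k, hk⟩ := h.exists_odd_mul_of_getElem_eq hi₀ hpi
    obtain ⟨m, hm⟩ := hstep.2 rfl
    have := padicValInt_two_eq_of_odd_mul_eq_odd_mul ha' hb' (hk.symm.trans hm)
    refine ⟨?_, ?_, fun _ => rfl⟩ <;> omega
  · exact ⟨fun _ => rfl, fun _ => rfl, fun _ => rfl⟩
  · obtain ⟨k, hk⟩ := h.exists_even_mul_of_getElem_eq hi₀ hpi
    obtain ⟨m, hm⟩ := hstep.2 rfl
    have := padicValInt_two_lt_of_odd_mul_eq_even_mul hb' ha' (hm.symm.trans hk)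
    refine ⟨?_, fun _ => rfl, ?_⟩ <;> omega

end WeaklyRealizableFrom

/-- Sign constraints on two consecutive entries `εa, ε'b` of a weakly realizable signed
pattern, according to the 2-adic valuations of `a` and `b`. -/
theorem consecutive_sign_constraints (l₁ l₂ : List (ℤ × ℕ)) (ε ε' : ℤ) (a b : ℕ)
    (hp : IsSignedPattern (l₁ ++ [(ε, a), (ε', b)] ++ l₂))
    (h : WeaklyRealizable (l₁ ++ [(ε, a), (ε', b)] ++ l₂)) :
    (padicValNat 2 b < padicValNat 2 a → ε' = 1) ∧
    (padicValNat 2 a < padicValNat 2 b → ε = -1) ∧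
    (padicValNat 2 a = padicValNat 2 b → ε = -ε') := by
  obtain ⟨T, hT⟩ := h
  obtain ⟨hε, ha⟩ := hp (ε, a) (by simp)
  obtain ⟨hε', hb⟩ := hp (ε', b) (by simp)
  exact hT.sign_constraints (i := l₁.length) (by simp) (by simp) (by simp) hε hε' ha hb
end
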